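/- Let G be a connected d-regular finite simple undirected graph on vertex set {1,…,N} (d ≥ 1) with adjacency matrix A, and let p ∈ [0,1]. Then the rank of the matrix (d + 1 − p)·I − p·A − ((1−p)/d)·A − ((1−p)/d)·A² equals N − 1. -/

import Mathlib

/-!
With `c = (1 - p) / d`, so that `d * c = 1 - p`, the matrix factors as `L * B`, where
`L = d • 1 - A` is the Laplacian of the regular graph and `B = (1 + c) • 1 + c • A`.
Writing `B = c • (d • 1 + A) + (p + c) • 1` exhibits `B` as positive definite, because the
signless Laplacian `d • 1 + A` is positive semidefinite (its quadratic form is a sum of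
`(x i + x j) ^ 2` over edges). Hence `rank (L * B) = rank L`, which is `N` minus the number
of connected components.
-/

open Matrix Finset

namespace SimpleGraph

variable {V : Type*} [Fintype V] [DecidableEq V] (G : SimpleGraph V) [DecidableRel G.Adj]

theorem rank_lapMatrix_add_card_connectedComponent :
    (G.lapMatrix ℝ).rank + Fintype.card G.ConnectedComponent = Fintype.card V := by
  rw [card_connectedComponent_eq_finrank_ker_toLin'_lapMatrix, Matrix.rank,
    ← Module.finrank_fintype_fun_eq_card (R := ℝ)]
  exact LinearMap.finrank_range_add_finrank_ker _

theorem Connected.rank_lapMatrix {G : SimpleGraph V} [DecidableRel G.Adj]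
    (h : G.Connected) : (G.lapMatrix ℝ).rank = Fintype.card V - 1 := by
  have hne : Nonempty G.ConnectedComponent := h.nonempty.map G.connectedComponentMk
  have hcard : Fintype.card G.ConnectedComponent = 1 :=
    le_antisymm (Fintype.card_le_one_iff_subsingleton.mpr
      h.preconnected.subsingleton_connectedComponent) Fintype.card_pos
  have hsum := G.rank_lapMatrix_add_card_connectedComponent
  omega

theorem toLinearMap₂'_degMatrix_add_adjMatrix (R : Type*) [Field R] [CharZero R] (x : V → R) :
    toLinearMap₂' R (G.degMatrix R + G.adjMatrix R) x x =
    (∑ i : V, ∑ j : V, if G.Adj i j then (x i + x j) ^ 2 else 0) / 2 := by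
  simp_rw [toLinearMap₂'_apply', add_mulVec, dotProduct_add, dotProduct_mulVec_degMatrix,
    dotProduct_mulVec_adjMatrix, ← sum_add_distrib, degree_eq_sum_if_adj, sum_mul, ite_mul,
    one_mul, zero_mul, ← sum_add_distrib, ite_add_ite, add_zero]
  rw [← add_self_div_two (∑ x_1 : V, ∑ x_2 : V, _)]
  conv_lhs => enter [1, 2, 2, i, 2, j]; rw [if_congr (adj_comm G i j) rfl rfl]
  conv_lhs => enter [1, 2]; rw [Finset.sum_comm]
  simp_rw [← sum_add_distrib, ite_add_ite]
  congr 2 with i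
  congr 2 with j
  ring_nf

theorem posSemidef_degMatrix_add_adjMatrix (R : Type*) [Field R] [LinearOrder R]
    [IsStrictOrderedRing R] [StarRing R] [TrivialStar R] :
    PosSemidef (G.degMatrix R + G.adjMatrix R) := by
  refine .of_dotProduct_mulVec_nonneg ?_ (fun x ↦ ?_)
  · rw [IsHermitian, conjTranspose_eq_transpose_of_trivial, transpose_add,
      (G.isSymm_degMatrix (R := R)).eq, (G.isSymm_adjMatrix (α := R)).eq]
  · rw [star_trivial, ← toLinearMap₂'_apply', toLinearMap₂'_degMatrix_add_adjMatrix]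
    positivity

theorem IsRegularOfDegree.degMatrix_eq {G : SimpleGraph V} [DecidableRel G.Adj]
    {d : ℕ} (h : G.IsRegularOfDegree d) (R : Type*) [NonAssocSemiring R] :
    G.degMatrix R = (d : R) • 1 := by
  rw [degMatrix, smul_one_eq_diagonal]
  simp only [h.degree_eq]

end SimpleGraph

namespace Matrix

variable {n : Type*} [DecidableEq n]

theorem smul_one_sub_mul_smul_one_add_smul [Fintype n] {R : Type*} [CommRing R]
    (A : Matrix n n R) {d c p : R} (hdc : d * c = 1 - p) :
    (d • 1 - A) * ((1 + c) • 1 + c • A) =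
      (d + 1 - p) • 1 - p • A - c • A - c • A ^ 2 := by
  simp only [sub_mul, mul_add, smul_mul_assoc, mul_smul_comm, one_mul, mul_one, sq]
  match_scalars
  · linear_combination hdc
  · linear_combination hdc
  · ring

theorem posDef_smul_one_add_smul_of_posSemidef {R : Type*} [Field R] [LinearOrder R]
    [IsOrderedRing R] [StarRing R] [StarOrderedRing R] {A : Matrix n n R} {d c : R}
    (hA : (d • 1 + A).PosSemidef) (hc : 0 ≤ c) (hcd : 0 < 1 + c - c * d) :
    ((1 + c) • 1 + c • A).PosDef := by
  have hsplit :
      (1 + c) • 1 + c • A = c • (d • 1 + A) + (1 + c - c * d) • (1 : Matrix n n R) := by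
    match_scalars <;> ring
  rw [hsplit]
  exact PosDef.posSemidef_add (hA.smul hc) (PosDef.one.smul hcd)

end Matrix

/-- For a connected `d`-regular graph (`d ≥ 1`) and `p ∈ [0,1]`, the rank of
`(d + 1 − p)·I − p·A − ((1−p)/d)·A − ((1−p)/d)·A²` equals `N − 1`. -/
theorem stmt_12 (N d : ℕ) (hd : 1 ≤ d) (G : SimpleGraph (Fin N)) [DecidableRel G.Adj]
    (hconn : G.Connected) (hreg : G.IsRegularOfDegree d)
    (p : ℝ) (hp0 : 0 ≤ p) (hp1 : p ≤ 1) :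
    (((d : ℝ) + 1 - p) • (1 : Matrix (Fin N) (Fin N) ℝ) - p • G.adjMatrix ℝ
      - ((1 - p) / (d : ℝ)) • G.adjMatrix ℝ
      - ((1 - p) / (d : ℝ)) • (G.adjMatrix ℝ) ^ 2).rank = N - 1 := by
  set c := (1 - p) / (d : ℝ)
  have hd' : (1 : ℝ) ≤ d := by exact_mod_cast hd
  have hdc : (d : ℝ) * c = 1 - p := mul_div_cancel₀ _ (by positivity)
  have hc : 0 ≤ c := div_nonneg (by linarith) (by positivity)
  have hlap : G.lapMatrix ℝ = (d : ℝ) • 1 - G.adjMatrix ℝ := by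
    rw [SimpleGraph.lapMatrix, hreg.degMatrix_eq]
  have hB : ((1 + c) • 1 + c • G.adjMatrix ℝ).PosDef := by
    refine posDef_smul_one_add_smul_of_posSemidef (d := (d : ℝ)) ?_ hc (by nlinarith)
    simpa only [hreg.degMatrix_eq] using G.posSemidef_degMatrix_add_adjMatrix ℝ
  rw [← smul_one_sub_mul_smul_one_add_smul _ hdc, ← hlap,
    rank_mul_eq_left_of_isUnit_det _ _ ((isUnit_iff_isUnit_det _).mp hB.isUnit),
    hconn.rank_lapMatrix, Fintype.card_fin]
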